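/- arXiv:1104.3968 — 2 statements merged into one kernel-verified Lean document; each statement's English description precedes it below -/
import Mathlib

section
/- Let n ≥ 1, let Ω ⊆ ℂⁿ be an open connected set, let M ≥ 0, and let u : Ω → ℝ be upper semicontinuous with u ≥ −M on Ω. Let (u_k)_{k∈ℕ} be a sequence of continuous functions u_k : Ω → ℝ with u_k ≥ −M, u_k ≥ u_{k+1} for all k, and u_k(x) → u(x) pointwise as k → ∞ for every x ∈ Ω. Then for every x ∈ Ω, û(x) = inf_k (û_k)(x), where û is the Poisson envelope of u and û_k is the Poisson envelope of u_k. -/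
open MeasureTheory Metric Set Filter

/-- An analytic disc in `S ⊆ ℂⁿ`: continuous on the closed unit disc, holomorphic on the
open unit disc, with values in `S`. -/
def IsAnalyticDisc {n : ℕ} (S : Set (EuclideanSpace ℂ (Fin n)))
    (f : ℂ → EuclideanSpace ℂ (Fin n)) : Prop :=
  ContinuousOn f (closedBall 0 1) ∧ DifferentiableOn ℂ f (ball 0 1) ∧
    MapsTo f (closedBall 0 1) S

/-- The Poisson functional `P_u(f) = (1/2π) ∫₀^{2π} u(f(e^{it})) dt`. -/
noncomputable def poissonFunctional {n : ℕ} (u : EuclideanSpace ℂ (Fin n) → ℝ)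
    (f : ℂ → EuclideanSpace ℂ (Fin n)) : ℝ :=
  (1 / (2 * Real.pi)) *
    ∫ t in (0:ℝ)..(2 * Real.pi), u (f (Complex.exp (t * Complex.I)))

/-- The Poisson envelope `û(x) = inf { P_u(f) : f analytic disc in S, f(0) = x }`. -/
noncomputable def poissonEnvelope {n : ℕ} (S : Set (EuclideanSpace ℂ (Fin n)))
    (u : EuclideanSpace ℂ (Fin n) → ℝ) (x : EuclideanSpace ℂ (Fin n)) : ℝ :=
  sInf {c : ℝ | ∃ f : ℂ → EuclideanSpace ℂ (Fin n),
    IsAnalyticDisc S f ∧ f 0 = x ∧ c = poissonFunctional u f}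

lemma expMemAux (t : ℝ) : Complex.exp (t * Complex.I) ∈ closedBall (0:ℂ) 1 := by
  rw [mem_closedBall_zero_iff]
  simp [Complex.norm_exp]

lemma contHAux {n : ℕ} {S : Set (EuclideanSpace ℂ (Fin n))} {f : ℂ → EuclideanSpace ℂ (Fin n)}
    (hf : IsAnalyticDisc S f) :
    Continuous fun t : ℝ => f (Complex.exp (t * Complex.I)) := by
  exact hf.1.comp_continuous (Complex.continuous_exp.comp (by continuity)) fun t => expMemAux t

lemma contCompAux {n : ℕ} {S : Set (EuclideanSpace ℂ (Fin n))} {f : ℂ → EuclideanSpace ℂ (Fin n)}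
    (hf : IsAnalyticDisc S f) {v : EuclideanSpace ℂ (Fin n) → ℝ} (hv : ContinuousOn v S) :
    Continuous fun t : ℝ => v (f (Complex.exp (t * Complex.I))) :=
  hv.comp_continuous (contHAux hf) fun t => hf.2.2 (expMemAux t)

lemma pfLBAux {n : ℕ} {S : Set (EuclideanSpace ℂ (Fin n))} {f : ℂ → EuclideanSpace ℂ (Fin n)}
    (hf : IsAnalyticDisc S f) {v : EuclideanSpace ℂ (Fin n) → ℝ} {M : ℝ}
    (hv : ∀ y ∈ S, -M ≤ v y)
    (hint : IntervalIntegrable (fun t => v (f (Complex.exp (t * Complex.I))))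
      volume 0 (2 * Real.pi)) :
    -M ≤ poissonFunctional v f := by
  have h2π : (0:ℝ) < 2 * Real.pi := by positivity
  have hI : ((2 * Real.pi) - 0) • (-M) ≤
      ∫ t in (0:ℝ)..(2 * Real.pi), v (f (Complex.exp (t * Complex.I))) := by
    rw [← intervalIntegral.integral_const]
    exact intervalIntegral.integral_mono_on h2π.le intervalIntegrable_const hint
      fun t _ => hv _ (hf.2.2 (expMemAux t))
  have : (1 / (2 * Real.pi)) * (((2 * Real.pi) - 0) • (-M)) ≤ poissonFunctional v f :=
    mul_le_mul_of_nonneg_left hI (by positivity)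
  calc -M = (1 / (2 * Real.pi)) * (((2 * Real.pi) - 0) • (-M)) := by
        rw [smul_eq_mul]
        field_simp
        ring
    _ ≤ poissonFunctional v f := this

lemma pfMonoAux {n : ℕ} {S : Set (EuclideanSpace ℂ (Fin n))} {f : ℂ → EuclideanSpace ℂ (Fin n)}
    (hf : IsAnalyticDisc S f) {v w : EuclideanSpace ℂ (Fin n) → ℝ}
    (hvw : ∀ y ∈ S, v y ≤ w y)
    (hiv : IntervalIntegrable (fun t => v (f (Complex.exp (t * Complex.I)))) volume 0 (2 * Real.pi))
    (hiw : IntervalIntegrable (fun t => w (f (Complex.exp (t * Complex.I)))) volume 0 (2 * Real.pi)) :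
    poissonFunctional v f ≤ poissonFunctional w f := by
  have h2π : (0:ℝ) < 2 * Real.pi := by positivity
  exact mul_le_mul_of_nonneg_left
    (intervalIntegral.integral_mono_on h2π.le hiv hiw fun t _ => hvw _ (hf.2.2 (expMemAux t)))
    (by positivity)

/-- Step 2 reduction: the Poisson envelope of an upper semicontinuous function equals
the (decreasing) infimum of the Poisson envelopes of continuous functions decreasing
pointwise to it. -/
theorem poissonEnvelope_iInf_of_decreasing_limit (n : ℕ) (hn : 1 ≤ n)
    (Ω : Set (EuclideanSpace ℂ (Fin n))) (hΩo : IsOpen Ω) (hΩc : IsConnected Ω)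
    (M : ℝ) (hM : 0 ≤ M)
    (u : EuclideanSpace ℂ (Fin n) → ℝ)
    (husc : UpperSemicontinuousOn u Ω)
    (hub : ∀ x ∈ Ω, -M ≤ u x)
    (uk : ℕ → EuclideanSpace ℂ (Fin n) → ℝ)
    (hukc : ∀ k, ContinuousOn (uk k) Ω)
    (hukb : ∀ k, ∀ x ∈ Ω, -M ≤ uk k x)
    (hmono : ∀ k, ∀ x ∈ Ω, uk (k + 1) x ≤ uk k x)
    (hlim : ∀ x ∈ Ω, Filter.Tendsto (fun k => uk k x) Filter.atTop (nhds (u x))) :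
    ∀ x ∈ Ω, poissonEnvelope Ω u x = ⨅ k : ℕ, poissonEnvelope Ω (uk k) x := by

  intro x hx
  have h2π : (0:ℝ) < 2 * Real.pi := by positivity
  -- antitonicity and u ≤ uk k on Ω
  have hanti : ∀ y ∈ Ω, Antitone fun k => uk k y := fun y hy =>
    antitone_nat_of_succ_le fun k => hmono k y hy
  have hule : ∀ k, ∀ y ∈ Ω, u y ≤ uk k y := by
    intro k y hy
    refine le_of_tendsto (hlim y hy) ?_
    filter_upwards [eventually_ge_atTop k] with j hj
    exact hanti y hy hj
  -- integrability of uk k along any disc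
  have hintk : ∀ (f : ℂ → EuclideanSpace ℂ (Fin n)), IsAnalyticDisc Ω f → ∀ k,
      IntervalIntegrable (fun t => uk k (f (Complex.exp (t * Complex.I))))
        volume 0 (2 * Real.pi) :=
    fun f hf k => (contCompAux hf (hukc k)).intervalIntegrable _ _
  -- measurability and integrability of u along any disc
  have hintu : ∀ (f : ℂ → EuclideanSpace ℂ (Fin n)), IsAnalyticDisc Ω f →
      IntervalIntegrable (fun t => u (f (Complex.exp (t * Complex.I))))
        volume 0 (2 * Real.pi) := by
    intro f hf
    rw [intervalIntegrable_iff]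
    have hmem : ∀ t : ℝ, f (Complex.exp (t * Complex.I)) ∈ Ω := fun t => hf.2.2 (expMemAux t)
    have hmeas : AEStronglyMeasurable (fun t : ℝ => u (f (Complex.exp (t * Complex.I))))
        (volume.restrict (Set.uIoc (0:ℝ) (2 * Real.pi))) := by
      refine aestronglyMeasurable_of_tendsto_ae (atTop : Filter ℕ)
        (f := fun (k : ℕ) (t : ℝ) => uk k (f (Complex.exp (t * Complex.I)))) ?_ ?_
      · exact fun k => ((contCompAux hf (hukc k)).aestronglyMeasurable)
      · exact Eventually.of_forall fun t => hlim _ (hmem t)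
    refine Integrable.mono
      (g := fun t => M + |uk 0 (f (Complex.exp (t * Complex.I)))|) ?_ hmeas ?_
    · exact ((continuous_const.add (contCompAux hf (hukc 0)).abs).intervalIntegrable
        0 (2 * Real.pi)).def'
    · refine Eventually.of_forall fun t => ?_
      have h1 : -M ≤ u (f (Complex.exp (t * Complex.I))) := hub _ (hmem t)
      have h2 : u (f (Complex.exp (t * Complex.I))) ≤ uk 0 (f (Complex.exp (t * Complex.I))) :=
        hule 0 _ (hmem t)
      have habs : |u (f (Complex.exp (t * Complex.I)))| ≤
          M + |uk 0 (f (Complex.exp (t * Complex.I)))| := by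
        rw [abs_le]
        constructor
        · nlinarith [abs_nonneg (uk 0 (f (Complex.exp (t * Complex.I))))]
        · nlinarith [le_abs_self (uk 0 (f (Complex.exp (t * Complex.I))))]
      calc ‖u (f (Complex.exp (t * Complex.I)))‖ = |u (f (Complex.exp (t * Complex.I)))| := rfl
        _ ≤ M + |uk 0 (f (Complex.exp (t * Complex.I)))| := habs
        _ ≤ ‖M + |uk 0 (f (Complex.exp (t * Complex.I)))|‖ := le_abs_self _
  -- dominated convergence: P_{uk k}(f) → P_u(f)
  have hconv : ∀ (f : ℂ → EuclideanSpace ℂ (Fin n)), IsAnalyticDisc Ω f →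
      Tendsto (fun k => poissonFunctional (uk k) f) atTop (nhds (poissonFunctional u f)) := by
    intro f hf
    have hmem : ∀ t : ℝ, f (Complex.exp (t * Complex.I)) ∈ Ω := fun t => hf.2.2 (expMemAux t)
    unfold poissonFunctional
    refine Tendsto.const_mul _ ?_
    refine intervalIntegral.tendsto_integral_filter_of_dominated_convergence
      (fun t => M + |uk 0 (f (Complex.exp (t * Complex.I)))|) ?_ ?_ ?_ ?_
    · exact Eventually.of_forall fun k => (contCompAux hf (hukc k)).aestronglyMeasurable
    · refine Eventually.of_forall fun k => Eventually.of_forall fun t _ => ?_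
      have h1 : -M ≤ uk k (f (Complex.exp (t * Complex.I))) := hukb k _ (hmem t)
      have h2 : uk k (f (Complex.exp (t * Complex.I))) ≤ uk 0 (f (Complex.exp (t * Complex.I))) :=
        hanti _ (hmem t) (Nat.zero_le k)
      show ‖uk k (f (Complex.exp (t * Complex.I)))‖ ≤
        M + |uk 0 (f (Complex.exp (t * Complex.I)))|
      rw [Real.norm_eq_abs, abs_le]
      refine ⟨by linarith [abs_nonneg (uk 0 (f (Complex.exp (t * Complex.I))))],
        by linarith [le_abs_self (uk 0 (f (Complex.exp (t * Complex.I))))]⟩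
    · exact (continuous_const.add (contCompAux hf (hukc 0)).abs).intervalIntegrable _ _
    · exact Eventually.of_forall fun t _ => hlim _ (hmem t)
  -- the constant disc
  have hconst : IsAnalyticDisc Ω (fun _ => x) ∧ (fun _ : ℂ => x) 0 = x :=
    ⟨⟨continuousOn_const, differentiableOn_const _, fun _ _ => hx⟩, rfl⟩
  -- nonempty sets
  have hne : ∀ v : EuclideanSpace ℂ (Fin n) → ℝ,
      {c : ℝ | ∃ f, IsAnalyticDisc Ω f ∧ f 0 = x ∧ c = poissonFunctional v f}.Nonempty :=
    fun v => ⟨poissonFunctional v (fun _ => x), fun _ => x, hconst.1, hconst.2, rfl⟩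
  -- bddBelow for uk sets
  have hbdk : ∀ k, ∀ c ∈ {c : ℝ | ∃ f, IsAnalyticDisc Ω f ∧ f 0 = x ∧
      c = poissonFunctional (uk k) f}, -M ≤ c := by
    rintro k c ⟨f, hf, -, rfl⟩
    exact pfLBAux hf (hukb k) (hintk f hf k)
  have hbdu : ∀ c ∈ {c : ℝ | ∃ f, IsAnalyticDisc Ω f ∧ f 0 = x ∧
      c = poissonFunctional u f}, -M ≤ c := by
    rintro c ⟨f, hf, -, rfl⟩
    exact pfLBAux hf hub (hintu f hf)
  have hbMk : ∀ k, -M ≤ poissonEnvelope Ω (uk k) x := fun k => le_csInf (hne _) (hbdk k)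
  have hbddRange : BddBelow (Set.range fun k => poissonEnvelope Ω (uk k) x) := by
    refine ⟨-M, ?_⟩
    rintro _ ⟨k, rfl⟩
    exact hbMk k
  apply le_antisymm
  · -- û(x) ≤ û_k(x) for each k
    refine le_ciInf fun k => ?_
    refine le_csInf (hne _) ?_
    rintro c ⟨f, hf, hf0, rfl⟩
    have : poissonFunctional u f ≤ poissonFunctional (uk k) f :=
      pfMonoAux hf (hule k) (hintu f hf) (hintk f hf k)
    calc poissonEnvelope Ω u x ≤ poissonFunctional u f :=
          csInf_le ⟨-M, hbdu⟩ ⟨f, hf, hf0, rfl⟩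
      _ ≤ poissonFunctional (uk k) f := this
  · refine le_csInf (hne u) ?_
    rintro c ⟨f, hf, hf0, rfl⟩
    refine ge_of_tendsto (hconv f hf) ?_
    refine Eventually.of_forall fun k => ?_
    calc (⨅ k, poissonEnvelope Ω (uk k) x) ≤ poissonEnvelope Ω (uk k) x :=
          ciInf_le hbddRange k
      _ ≤ poissonFunctional (uk k) f := csInf_le ⟨-M, hbdk k⟩ ⟨f, hf, hf0, rfl⟩
end

section
/- Let n ≥ 1 and let λ : ℂ × ℂ → ℂⁿ be continuous on 𝕋 × {|z| ≤ 1} (where 𝕋 = {ζ ∈ ℂ : |ζ| = 1}) such that for each ζ ∈ 𝕋 the map z ↦ λ(ζ,z) is holomorphic on the open unit disc, continuous on the closed unit disc, and satisfies λ(ζ,0) = 0. Then for every ε > 0 there exist natural numbers m and N ≥ 1 and polynomial maps A₁, …, A_N : ℂ → ℂⁿ (each coordinate a polynomial in ζ) such that sup{ ‖λ(ζ,z) − ζ^{−m} ∑_{j=1}^{N} A_j(ζ) z^j‖ : ζ ∈ 𝕋, |z| ≤ 1 } < ε. -/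
/-!
Shrinking the disc to radius `r < 1` costs little, by uniform continuity on the compact set
`𝕋 × closedBall 0 1`. On the smaller disc the Taylor series in `z` converges uniformly in `ζ`,
by Cauchy's estimates on a circle of radius between `r` and `1`; its coefficients are Cauchy
integrals, hence continuous in `ζ`, and the constant one is `λ(ζ, 0) = 0`. Finally, by
Stone–Weierstrass, every coordinate of every coefficient is uniformly close on the circle to a
Laurent polynomial `ζ^{-m} q(ζ)`, these being the algebra generated by `ζ` and `ζ̄ = ζ⁻¹`.
-/

open MeasureTheory Metric Set Filter Function Polynomial Finset
open scoped NNReal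

theorem exists_dilation_dist_lt {X Y : Type*} [PseudoMetricSpace X] [CompactSpace X]
    [PseudoMetricSpace Y] {f : X → ℂ → Y}
    (hf : ContinuousOn (uncurry f) (univ ×ˢ closedBall 0 1)) {ε : ℝ} (hε : 0 < ε) :
    ∃ r : ℝ, 0 ≤ r ∧ r < 1 ∧ ∀ x, ∀ z ∈ closedBall (0 : ℂ) 1, dist (f x z) (f x (r * z)) < ε := by
  obtain ⟨δ, hδ, hfδ⟩ := Metric.uniformContinuousOn_iff.1
    ((isCompact_univ.prod (isCompact_closedBall 0 1)).uniformContinuousOn_of_continuous hf) ε hε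
  refine ⟨max 0 (1 - δ / 2), le_max_left _ _, max_lt one_pos (by linarith), fun x z hz => ?_⟩
  set r := max 0 (1 - δ / 2)
  have hr : 0 ≤ r := le_max_left _ _
  have hr1 : r ≤ 1 := max_le zero_le_one (by linarith)
  have hz1 : ‖z‖ ≤ 1 := mem_closedBall_zero_iff.1 hz
  have hrz : (r : ℂ) * z ∈ closedBall (0 : ℂ) 1 := by
    rw [mem_closedBall_zero_iff, norm_mul, Complex.norm_real, Real.norm_of_nonneg hr]
    exact mul_le_one₀ hr1 (norm_nonneg z) hz1
  refine hfδ (x, z) ⟨trivial, hz⟩ (x, r * z) ⟨trivial, hrz⟩ ?_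
  calc dist (x, z) (x, (r : ℂ) * z) = (1 - r) * ‖z‖ := by
        rw [Prod.dist_eq, dist_self, dist_eq_norm, max_eq_right (norm_nonneg _),
          ← one_sub_mul, norm_mul, ← Complex.ofReal_one, ← Complex.ofReal_sub, Complex.norm_real,
          Real.norm_of_nonneg (by linarith)]
    _ ≤ 1 - r := mul_le_of_le_one_right (by linarith) hz1
    _ < δ := by linarith [le_max_right 0 (1 - δ / 2)]

section CauchyCoefficients

variable {E : Type*} [NormedAddCommGroup E] [NormedSpace ℂ E]

theorem continuous_cauchyPowerSeries_coeff {X : Type*} [TopologicalSpace X] {f : X → ℂ → E}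
    {c : ℂ} {R : ℝ} (hR : 0 < R) (hf : ContinuousOn (uncurry f) (univ ×ˢ sphere c R)) (k : ℕ) :
    Continuous fun x => (cauchyPowerSeries (f x) c R).coeff k := by
  have hcirc : Continuous fun p : X × ℝ => circleMap c R p.2 := by fun_prop
  have hf' : Continuous fun p : X × ℝ => f p.1 (circleMap c R p.2) :=
    hf.comp_continuous (continuous_fst.prodMk hcirc)
      fun p => ⟨trivial, circleMap_mem_sphere c hR.le p.2⟩
  have hne : ∀ p : X × ℝ, circleMap c R p.2 - c ≠ 0 :=
    fun p => sub_ne_zero.2 (circleMap_ne_center hR.ne')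
  have hsub : Continuous fun p : X × ℝ => circleMap c R p.2 - c := hcirc.sub continuous_const
  simp only [FormalMultilinearSeries.coeff, Pi.one_def, cauchyPowerSeries_apply, circleIntegral,
    deriv_circleMap]
  refine continuous_const.smul
    (intervalIntegral.continuous_parametric_intervalIntegral_of_continuous' ?_ _ _)
  show Continuous fun p : X × ℝ => (circleMap 0 R p.2 * Complex.I) •
    (1 / (circleMap c R p.2 - c)) ^ k • (circleMap c R p.2 - c)⁻¹ • f p.1 (circleMap c R p.2)
  exact (((continuous_circleMap 0 R).comp continuous_snd).mul continuous_const).smul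
    (((continuous_const.div hsub hne).pow k).smul ((hsub.inv₀ hne).smul hf'))

theorem norm_cauchyPowerSeries_coeff_le {f : ℂ → E} {c : ℂ} {R C : ℝ} (hR : 0 < R)
    (hf : ∀ z ∈ sphere c R, ‖f z‖ ≤ C) (k : ℕ) :
    ‖(cauchyPowerSeries f c R).coeff k‖ ≤ C / R ^ k := by
  rw [FormalMultilinearSeries.coeff, Pi.one_def, cauchyPowerSeries_apply]
  refine (circleIntegral.norm_two_pi_i_inv_smul_integral_le_of_norm_le_const hR.le
    (C := C / R ^ (k + 1)) fun z hz => ?_).trans_eq ?_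
  · have hz' : ‖z - c‖ = R := mem_sphere_iff_norm.1 hz
    rw [norm_smul, norm_smul, norm_pow, norm_div, norm_inv, hz', norm_one, pow_succ]
    calc (1 / R) ^ k * (R⁻¹ * ‖f z‖) = ‖f z‖ / (R ^ k * R) := by
          rw [one_div, inv_pow]; field_simp
      _ ≤ C / (R ^ k * R) := by gcongr; exact hf z hz
  · field_simp; ring

theorem norm_sum_cauchyPowerSeries_coeff_sub_le [CompleteSpace E] {f : ℂ → E} {c : ℂ} {R : ℝ≥0}
    {C r : ℝ} (hR : 0 < R) (hf : DifferentiableOn ℂ f (closedBall c R))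
    (hC : ∀ z ∈ sphere c R, ‖f z‖ ≤ C) (hrR : r < R) {w : ℂ} (hw : ‖w‖ ≤ r) (N : ℕ) :
    ‖∑ k ∈ range N, w ^ k • (cauchyPowerSeries f c R).coeff k - f (c + w)‖ ≤
      C * (r / R) ^ N / (1 - r / R) := by
  have hR' : (0 : ℝ) < R := hR
  have hr : 0 ≤ r := (norm_nonneg w).trans hw
  have hsum : HasSum (fun k => w ^ k • (cauchyPowerSeries f c R).coeff k) (f (c + w)) := by
    simpa only [FormalMultilinearSeries.apply_eq_pow_smul_coeff] using
      (hf.hasFPowerSeriesOnBall hR).hasSum (by simpa using hw.trans_lt hrR)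
  refine norm_sub_le_of_geometric_bound_of_hasSum ((div_lt_one hR').2 hrR) (fun k => ?_) hsum N
  calc ‖w ^ k • (cauchyPowerSeries f c R).coeff k‖ ≤ r ^ k * (C / R ^ k) := by
        rw [norm_smul, norm_pow]
        exact mul_le_mul (pow_le_pow_left₀ (norm_nonneg _) hw k)
          (norm_cauchyPowerSeries_coeff_le hR' hC k) (norm_nonneg _) (pow_nonneg hr k)
    _ = C * (r / R) ^ k := by rw [div_pow]; ring

theorem tendstoUniformlyOn_sum_cauchyPowerSeries_coeff [CompleteSpace E] {X : Type*}
    {f : X → ℂ → E} {c : ℂ} {R : ℝ≥0} {C r : ℝ} (hR : 0 < R)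
    (hf : ∀ x, DifferentiableOn ℂ (f x) (closedBall c R))
    (hC : ∀ x, ∀ z ∈ sphere c R, ‖f x z‖ ≤ C) (hr : 0 ≤ r) (hrR : r < R) :
    TendstoUniformlyOn
      (fun N (p : X × ℂ) => ∑ k ∈ range N, p.2 ^ k • (cauchyPowerSeries (f p.1) c R).coeff k)
      (fun p => f p.1 (c + p.2)) atTop (univ ×ˢ closedBall 0 r) := by
  have hR' : (0 : ℝ) < R := hR
  have hs : r / R < 1 := (div_lt_one hR').2 hrR
  have htail : Tendsto (fun N : ℕ => C * (r / R) ^ N / (1 - r / R)) atTop (nhds 0) := by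
    simpa using ((tendsto_pow_atTop_nhds_zero_of_lt_one (by positivity) hs).const_mul C).div_const
      (1 - r / R)
  rw [Metric.tendstoUniformlyOn_iff]
  intro ε hε
  filter_upwards [htail.eventually (gt_mem_nhds hε)] with N hN p hp
  rw [dist_eq_norm']
  exact (norm_sum_cauchyPowerSeries_coeff_sub_le hR (hf p.1) (hC p.1) hrR
    (mem_closedBall_zero_iff.1 hp.2) N).trans_lt hN

theorem exists_continuous_coeff_uniform_approx [CompleteSpace E] {X : Type*}
    [PseudoMetricSpace X] [CompactSpace X] {f : X → ℂ → E}
    (hf : ContinuousOn (uncurry f) (univ ×ˢ closedBall 0 1))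
    (hd : ∀ x, DifferentiableOn ℂ (f x) (ball 0 1)) {ε : ℝ} (hε : 0 < ε) :
    ∃ b : ℕ → X → E, (∀ k, Continuous (b k)) ∧ (∀ x, b 0 x = f x 0) ∧
      ∀ᶠ N in atTop, ∀ x, ∀ z ∈ closedBall (0 : ℂ) 1,
        ‖f x z - ∑ k ∈ range N, z ^ k • b k x‖ < ε := by
  obtain ⟨r, hr, hr1, hdil⟩ := exists_dilation_dist_lt hf (half_pos hε)
  set R : ℝ≥0 := ⟨(1 + r) / 2, by positivity⟩
  have hR : 0 < R := NNReal.coe_pos.1 (show (0 : ℝ) < (1 + r) / 2 by positivity)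
  have hrR : r < R := by change r < (1 + r) / 2; linarith
  have hR1 : (R : ℝ) < 1 := by change (1 + r) / 2 < 1; linarith
  have hsphere : sphere (0 : ℂ) R ⊆ closedBall 0 1 :=
    sphere_subset_closedBall.trans (closedBall_subset_closedBall hR1.le)
  obtain ⟨C, hC⟩ := (isCompact_univ.prod (isCompact_closedBall 0 1)).exists_bound_of_continuousOn hf
  have hdR : ∀ x, DifferentiableOn ℂ (f x) (closedBall 0 R) :=
    fun x => (hd x).mono (closedBall_subset_ball hR1)
  have hCR : ∀ x, ∀ z ∈ sphere (0 : ℂ) R, ‖f x z‖ ≤ C :=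
    fun x z hz => hC (x, z) ⟨trivial, hsphere hz⟩
  refine ⟨fun k x => (r : ℂ) ^ k • (cauchyPowerSeries (f x) 0 R).coeff k,
    fun k => (continuous_cauchyPowerSeries_coeff hR
      (hf.mono (prod_mono subset_rfl hsphere)) k).const_smul _,
    fun x => ?_, ?_⟩
  · simp [FormalMultilinearSeries.coeff, ((hdR x).hasFPowerSeriesOnBall hR).coeff_zero]
  filter_upwards [Metric.tendstoUniformlyOn_iff.1
    (tendstoUniformlyOn_sum_cauchyPowerSeries_coeff hR hdR hCR hr hrR) _ (half_pos hε)]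
    with N hN x z hz
  have hrz : (r : ℂ) * z ∈ closedBall (0 : ℂ) r := by
    rw [mem_closedBall_zero_iff, norm_mul, Complex.norm_real, Real.norm_of_nonneg hr]
    exact mul_le_of_le_one_right hr (mem_closedBall_zero_iff.1 hz)
  have htaylor := hN (x, r * z) ⟨trivial, hrz⟩
  rw [zero_add] at htaylor
  calc _ = dist (f x z)
        (∑ k ∈ range N, ((r : ℂ) * z) ^ k • (cauchyPowerSeries (f x) 0 R).coeff k) := by
        simp only [dist_eq_norm, smul_smul, ← mul_pow, mul_comm z]
    _ ≤ _ := dist_triangle _ (f x (r * z)) _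
    _ < ε / 2 + ε / 2 := add_lt_add (hdil x z hz) htaylor
    _ = ε := add_halves ε

end CauchyCoefficients

local notation "𝕋" => sphere (0 : ℂ) 1

/-- The Laurent polynomials `ζ ↦ ζ^{-m} q(ζ)` on the circle, written without inverses. -/
noncomputable def laurentPolynomialFunctions : Subalgebra ℂ C(𝕋, ℂ) where
  carrier := {f | ∃ (m : ℕ) (q : ℂ[X]), ∀ ζ : 𝕋, (ζ : ℂ) ^ m * f ζ = q.eval (ζ : ℂ)}
  mul_mem' := by
    rintro f g ⟨m₁, q₁, h₁⟩ ⟨m₂, q₂, h₂⟩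
    refine ⟨m₁ + m₂, q₁ * q₂, fun ζ => ?_⟩
    rw [eval_mul, ← h₁, ← h₂, ContinuousMap.mul_apply]
    ring
  add_mem' := by
    rintro f g ⟨m₁, q₁, h₁⟩ ⟨m₂, q₂, h₂⟩
    refine ⟨m₁ + m₂, X ^ m₂ * q₁ + X ^ m₁ * q₂, fun ζ => ?_⟩
    simp only [eval_add, eval_mul, eval_pow, eval_X, ← h₁, ← h₂, ContinuousMap.add_apply]
    ring
  algebraMap_mem' c := ⟨0, C c, fun ζ => by simp⟩

theorem eventually_pow_mul_eq_eval {f : C(𝕋, ℂ)} (hf : f ∈ laurentPolynomialFunctions) :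
    ∀ᶠ m in atTop, ∃ q : ℂ[X], ∀ ζ : 𝕋, (ζ : ℂ) ^ m * f ζ = q.eval (ζ : ℂ) := by
  obtain ⟨m, q, h⟩ := hf
  filter_upwards [eventually_ge_atTop m] with k hk
  refine ⟨X ^ (k - m) * q, fun ζ => ?_⟩
  rw [← Nat.sub_add_cancel hk, pow_add, mul_assoc, h, Nat.add_sub_cancel, eval_mul, eval_pow,
    eval_X]

theorem dense_laurentPolynomialFunctions :
    Dense (laurentPolynomialFunctions : Set C(𝕋, ℂ)) := by
  set ι : C(𝕋, ℂ) := ContinuousMap.restrict 𝕋 (.id ℂ)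
  have hadjoin : (StarAlgebra.adjoin ℂ {ι}).toSubalgebra ≤ laurentPolynomialFunctions := by
    rw [StarAlgebra.adjoin_toSubalgebra, Set.star_singleton, Algebra.adjoin_le_iff]
    rintro _ (rfl | rfl)
    · exact ⟨0, X, fun ζ => by simp [ι]⟩
    · refine ⟨1, 1, fun ζ => ?_⟩
      simp [ι, Complex.mul_conj, Complex.normSq_eq_norm_sq, norm_eq_of_mem_sphere]
  have hdense : Dense (StarAlgebra.adjoin ℂ {ι} : Set C(𝕋, ℂ)) := by
    simpa [dense_iff_closure_eq, StarAlgebra.elemental, ← StarSubalgebra.topologicalClosure_coe,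
      ← SetLike.coe_set_eq] using ContinuousMap.elemental_id_eq_top (𝕜 := ℂ) 𝕋
  exact hdense.mono hadjoin

theorem exists_pow_mul_approx {κ : Type*} [Finite κ] (g : κ → C(𝕋, ℂ)) {δ : ℝ} (hδ : 0 < δ) :
    ∃ (m : ℕ) (q : κ → ℂ[X]), ∀ j (ζ : 𝕋), ‖(ζ : ℂ) ^ m * g j ζ - (q j).eval (ζ : ℂ)‖ < δ := by
  choose f hfL hfg using fun j => dense_laurentPolynomialFunctions.exists_dist_lt (g j) hδ
  obtain ⟨m, hm⟩ := (eventually_all.2 fun j => eventually_pow_mul_eq_eval (hfL j)).exists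
  choose q hq using hm
  refine ⟨m, q, fun j ζ => ?_⟩
  calc ‖(ζ : ℂ) ^ m * g j ζ - (q j).eval (ζ : ℂ)‖ = ‖g j ζ - f j ζ‖ := by
        rw [← hq j ζ, ← mul_sub, norm_mul, norm_pow, norm_eq_of_mem_sphere, one_pow, one_mul]
    _ ≤ dist (g j) (f j) := by rw [← dist_eq_norm]; exact ContinuousMap.dist_apply_le_dist ζ
    _ < δ := hfg j

theorem EuclideanSpace.norm_le_sum_norm {𝕜 ι : Type*} [RCLike 𝕜] [Fintype ι]
    (v : EuclideanSpace 𝕜 ι) : ‖v‖ ≤ ∑ i, ‖v i‖ := by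
  rw [EuclideanSpace.norm_eq]
  exact Real.sqrt_le_iff.2 ⟨by positivity, sum_sq_le_sq_sum_of_nonneg fun i _ => norm_nonneg _⟩

theorem exists_pow_smul_approx_euclidean {κ ι : Type*} [Finite κ] [Fintype ι]
    (g : κ → 𝕋 → EuclideanSpace ℂ ι) (hg : ∀ j, Continuous (g j)) {δ : ℝ} (hδ : 0 < δ) :
    ∃ (m : ℕ) (q : κ → ι → ℂ[X]), ∀ j (ζ : 𝕋),
      ‖(ζ : ℂ) ^ m • g j ζ - WithLp.toLp 2 (fun i => (q j i).eval (ζ : ℂ))‖ < δ := by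
  have hδ' : 0 < δ / (Fintype.card ι + 1) := by positivity
  obtain ⟨m, q, hq⟩ := exists_pow_mul_approx
    (fun p : κ × ι => ⟨fun ζ => g p.1 ζ p.2, (PiLp.continuous_apply 2 _ p.2).comp (hg p.1)⟩) hδ'
  refine ⟨m, fun j i => q (j, i), fun j ζ => ?_⟩
  calc _ ≤ ∑ i, ‖(ζ : ℂ) ^ m * g j ζ i - (q (j, i)).eval (ζ : ℂ)‖ :=
        EuclideanSpace.norm_le_sum_norm _
    _ ≤ ∑ _i : ι, δ / (Fintype.card ι + 1) :=
        sum_le_sum fun i _ => (hq (j, i) ζ).le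
    _ < δ := by
        rw [sum_const, card_univ, nsmul_eq_mul, ← mul_div_assoc,
          div_lt_iff₀ (by positivity)]
        nlinarith

theorem exists_laurent_approx_sum_pow_smul {ι : Type*} [Fintype ι] {N : ℕ}
    (b : Fin N → 𝕋 → EuclideanSpace ℂ ι) (hb : ∀ j, Continuous (b j)) {δ : ℝ} (hδ : 0 < δ) :
    ∃ (m : ℕ) (A : Fin N → ℂ → EuclideanSpace ℂ ι),
      (∀ j i, ∃ p : ℂ[X], ∀ ζ, A j ζ i = p.eval ζ) ∧
      ∀ ζ : 𝕋, ∀ z ∈ closedBall (0 : ℂ) 1,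
        ‖∑ j : Fin N, z ^ ((j : ℕ) + 1) • b j ζ -
          (ζ : ℂ)⁻¹ ^ m • ∑ j : Fin N, z ^ ((j : ℕ) + 1) • A j ζ‖ < δ := by
  have hδ' : 0 < δ / (N + 1) := by positivity
  obtain ⟨m, q, hq⟩ := exists_pow_smul_approx_euclidean b hb hδ'
  refine ⟨m, fun j ζ => WithLp.toLp 2 fun i => (q j i).eval ζ,
    fun j i => ⟨q j i, fun ζ => rfl⟩, fun ζ z hz => ?_⟩
  have hζ : (ζ : ℂ)⁻¹ ^ m * (ζ : ℂ) ^ m = 1 := by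
    rw [← mul_pow, inv_mul_cancel₀ (ne_zero_of_mem_unit_sphere ζ), one_pow]
  have hz : ‖z‖ ≤ 1 := mem_closedBall_zero_iff.1 hz
  calc _ = ‖∑ j : Fin N, z ^ ((j : ℕ) + 1) • (ζ : ℂ)⁻¹ ^ m •
          ((ζ : ℂ) ^ m • b j ζ - WithLp.toLp 2 fun i => (q j i).eval (ζ : ℂ))‖ := by
        rw [smul_sum, ← sum_sub_distrib]
        congr 1
        refine sum_congr rfl fun j _ => ?_
        rw [smul_sub, smul_sub, smul_smul _ ((ζ : ℂ) ^ m), hζ, one_smul, smul_comm]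
    _ ≤ ∑ _j : Fin N, δ / (N + 1) := by
        refine (norm_sum_le _ _).trans (sum_le_sum fun j _ => ?_)
        rw [norm_smul, norm_smul, norm_pow, norm_pow, norm_inv, norm_eq_of_mem_sphere, inv_one,
          one_pow, one_mul]
        exact (mul_le_of_le_one_left (norm_nonneg _) (pow_le_one₀ (norm_nonneg _) hz)).trans
          (hq j ζ).le
    _ < δ := by
        rw [sum_const, card_univ, Fintype.card_fin, nsmul_eq_mul, ← mul_div_assoc,
          div_lt_iff₀ (by positivity)]
        nlinarith

theorem laurent_polynomial_approximation_general (n : ℕ)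
    (lam : ℂ × ℂ → EuclideanSpace ℂ (Fin n))
    (hlamc : ContinuousOn lam (sphere (0:ℂ) 1 ×ˢ closedBall (0:ℂ) 1))
    (hlam : ∀ ζ ∈ sphere (0:ℂ) 1,
      ContinuousOn (fun z => lam (ζ, z)) (closedBall 0 1) ∧
      DifferentiableOn ℂ (fun z => lam (ζ, z)) (ball 0 1) ∧
      lam (ζ, 0) = 0)
    (ε : ℝ) (hε : 0 < ε) :
    ∃ (m N : ℕ), 1 ≤ N ∧ ∃ A : Fin N → ℂ → EuclideanSpace ℂ (Fin n),
      (∀ j : Fin N, ∀ i : Fin n, ∃ p : Polynomial ℂ, ∀ ζ : ℂ, A j ζ i = p.eval ζ) ∧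
      ∀ ζ ∈ sphere (0:ℂ) 1, ∀ z ∈ closedBall (0:ℂ) 1,
        ‖lam (ζ, z) - (ζ⁻¹ ^ m) • ∑ j : Fin N, z ^ ((j : ℕ) + 1) • A j ζ‖ < ε := by
  have hf : ContinuousOn (uncurry fun (ζ : 𝕋) z => lam (ζ, z)) (univ ×ˢ closedBall 0 1) :=
    hlamc.comp (continuous_subtype_val.prodMap continuous_id).continuousOn
      fun p hp => ⟨p.1.2, hp.2⟩
  obtain ⟨b, hb, hb0, hbε⟩ := exists_continuous_coeff_uniform_approx hf
    (fun ζ => (hlam ζ ζ.2).2.1) (half_pos hε)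
  obtain ⟨N, hN⟩ := eventually_atTop.1 hbε
  obtain ⟨m, A, hA, hAε⟩ := exists_laurent_approx_sum_pow_smul
    (fun (j : Fin (N + 1)) => b (j + 1)) (fun j => hb _) (half_pos hε)
  refine ⟨m, N + 1, Nat.le_add_left 1 N, A, hA, fun ζ hζ z hz => ?_⟩
  set P := ∑ j : Fin (N + 1), z ^ ((j : ℕ) + 1) • b (j + 1) ⟨ζ, hζ⟩ with hP_def
  have hP : ∑ k ∈ range (N + 2), z ^ k • b k ⟨ζ, hζ⟩ = P := by
    rw [hP_def, sum_range_succ', Fin.sum_univ_eq_sum_range (fun j => z ^ (j + 1) • b (j + 1) _),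
      pow_zero, one_smul, hb0, (hlam ζ hζ).2.2, add_zero]
  calc _ ≤ ‖lam (ζ, z) - P‖ + ‖P - _‖ := norm_sub_le_norm_sub_add_norm_sub _ P _
    _ < ε / 2 + ε / 2 := add_lt_add (hP ▸ hN (N + 2) (by omega) ⟨ζ, hζ⟩ z hz) (hAε ⟨ζ, hζ⟩ z hz)
    _ = ε := add_halves ε

/-- The approximation step in the proof of the paper's Lemma 7: a continuous family, over
the circle, of analytic discs in `ℂⁿ` vanishing at the origin can be approximated
uniformly on `𝕋 × closed unit disc` by Laurent polynomials
`ζ^{-m} ∑_{j=1}^{N} A_j(ζ) z^j` in `ζ` with polynomial coefficients `A_j` and no constant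
term in `z`. -/
theorem laurent_polynomial_approximation (n : ℕ) (hn : 1 ≤ n)
    (lam : ℂ × ℂ → EuclideanSpace ℂ (Fin n))
    (hlamc : ContinuousOn lam (sphere (0:ℂ) 1 ×ˢ closedBall (0:ℂ) 1))
    (hlam : ∀ ζ ∈ sphere (0:ℂ) 1,
      ContinuousOn (fun z => lam (ζ, z)) (closedBall 0 1) ∧
      DifferentiableOn ℂ (fun z => lam (ζ, z)) (ball 0 1) ∧
      lam (ζ, 0) = 0)
    (ε : ℝ) (hε : 0 < ε) :
    ∃ (m N : ℕ), 1 ≤ N ∧ ∃ A : Fin N → ℂ → EuclideanSpace ℂ (Fin n),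
      (∀ j : Fin N, ∀ i : Fin n, ∃ p : Polynomial ℂ, ∀ ζ : ℂ, A j ζ i = p.eval ζ) ∧
      ∀ ζ ∈ sphere (0:ℂ) 1, ∀ z ∈ closedBall (0:ℂ) 1,
        ‖lam (ζ, z) - (ζ⁻¹ ^ m) • ∑ j : Fin N, z ^ ((j : ℕ) + 1) • A j ζ‖ < ε :=
  laurent_polynomial_approximation_general n lam hlamc hlam ε hε
end
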